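/- Let Ω ⊂ ℝⁿ be a bounded open set, let A ⊆ Ω be measurable, and set K_A := {w ∈ 𝒟_s(Ω) : w ≤ 0 a.e. on ℝⁿ∖A}. Suppose w₀ ∈ K_A satisfies the variational inequality 𝓔_s(w₀, v − w₀) ≥ ∫_{ℝⁿ} (v − w₀) dx for every v ∈ K_A. Then w₀ ≥ 0 a.e. in ℝⁿ (hence w₀ = 0 a.e. on ℝⁿ∖A, i.e. w₀ ∈ 𝒟_s(A)), and w₀ is a weak solution of (−Δ)^s u = 1 in A. -/

import Mathlib

open MeasureTheory ENNReal Filter Topology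

noncomputable section

/-- Euclidean space ℝⁿ. -/
abbrev Rn (n : ℕ) := EuclideanSpace ℝ (Fin n)

/-- The first coordinate of a point of ℝⁿ (junk value `0` when `n = 0`). -/
def firstCoord {n : ℕ} (ζ : Rn n) : ℝ := if h : 0 < n then ζ ⟨0, h⟩ else 0

/-- The normalization constant `c(n,s)`. -/
def cns (n : ℕ) (s : ℝ) : ℝ :=
  (∫ ζ : Rn n, (1 - Real.cos (firstCoord ζ)) / ‖ζ‖ ^ ((n : ℝ) + 2 * s))⁻¹

/-- The square of the Gagliardo seminorm `[u]_s²`, as an extended nonnegative real. -/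
def gagSq (n : ℕ) (s : ℝ) (u : Rn n → ℝ) : ℝ≥0∞ :=
  ∫⁻ p : Rn n × Rn n,
    ENNReal.ofReal ((u p.1 - u p.2) ^ 2 / ‖p.1 - p.2‖ ^ ((n : ℝ) + 2 * s))

/-- The bilinear energy `𝓔_s(u,v)`. -/
def energy (n : ℕ) (s : ℝ) (u v : Rn n → ℝ) : ℝ :=
  (cns n s / 2) *
    ∫ p : Rn n × Rn n,
      (u p.1 - u p.2) * (v p.1 - v p.2) / ‖p.1 - p.2‖ ^ ((n : ℝ) + 2 * s)

/-- The class `𝒟_s(D)`: `L²` functions with finite Gagliardo seminorm vanishing a.e. outside `D`. -/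
def Ds (n : ℕ) (s : ℝ) (D : Set (Rn n)) (w : Rn n → ℝ) : Prop :=
  MemLp w 2 (volume : Measure (Rn n)) ∧ gagSq n s w < ⊤ ∧
    ∀ᵐ x : Rn n, x ∉ D → w x = 0

/-! Testing the variational inequality with `v = max w₀ 0` gives
`∫ w₀⁻ ≤ 𝓔_s(w₀, w₀⁻) ≤ 0`, the energy being nonpositive because `t ↦ t⁻` is antitone.
As `w₀` is in `L²` and vanishes outside the bounded set `Ω`, it is integrable, so `w₀⁻ = 0` a.e.
Then `w₀` vanishes outside `A`, hence `w₀ ± φ ∈ K_A` for every `φ ∈ 𝒟_s(A)`, and the two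
resulting inequalities give `𝓔_s(w₀, φ) = ∫ φ`. -/

theorem cns_nonneg (n : ℕ) (s : ℝ) : 0 ≤ cns n s :=
  inv_nonneg.2 <| integral_nonneg fun ζ =>
    div_nonneg (sub_nonneg.2 (Real.cos_le_one _)) (by positivity)

section

variable {n : ℕ} {s : ℝ}

theorem aemeasurable_gagSq_integrand {u : Rn n → ℝ} (hu : AEMeasurable u) :
    AEMeasurable (fun p : Rn n × Rn n =>
      ENNReal.ofReal ((u p.1 - u p.2) ^ 2 / ‖p.1 - p.2‖ ^ ((n : ℝ) + 2 * s))) := by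
  rw [Measure.volume_eq_prod]
  exact (((hu.comp_fst.sub hu.comp_snd).pow_const 2).div (by fun_prop)).ennreal_ofReal

theorem gagSq_add_le {u : Rn n → ℝ} (hu : AEMeasurable u) (v : Rn n → ℝ) :
    gagSq n s (u + v) ≤ 2 * gagSq n s u + 2 * gagSq n s v := by
  have key : ∀ a b c d q : ℝ, 0 ≤ q →
      ENNReal.ofReal (((a + b) - (c + d)) ^ 2 / q) ≤
        2 * ENNReal.ofReal ((a - c) ^ 2 / q) + 2 * ENNReal.ofReal ((b - d) ^ 2 / q) := by
    intro a b c d q hq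
    rw [← ENNReal.ofReal_ofNat 2, ← ENNReal.ofReal_mul zero_le_two,
      ← ENNReal.ofReal_mul zero_le_two, ← ENNReal.ofReal_add (by positivity) (by positivity),
      mul_div_assoc', mul_div_assoc', ← add_div]
    refine ENNReal.ofReal_le_ofReal (div_le_div_of_nonneg_right ?_ hq)
    nlinarith [sq_nonneg (a - c - (b - d))]
  calc gagSq n s (u + v)
      ≤ ∫⁻ p : Rn n × Rn n,
          (2 * ENNReal.ofReal ((u p.1 - u p.2) ^ 2 / ‖p.1 - p.2‖ ^ ((n : ℝ) + 2 * s)) +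
           2 * ENNReal.ofReal ((v p.1 - v p.2) ^ 2 / ‖p.1 - p.2‖ ^ ((n : ℝ) + 2 * s))) :=
        lintegral_mono fun p => key _ _ _ _ _ (by positivity)
    _ = 2 * gagSq n s u + 2 * gagSq n s v := by
        rw [lintegral_add_left' ((aemeasurable_gagSq_integrand hu).const_mul 2),
          lintegral_const_mul' _ _ ofNat_ne_top, lintegral_const_mul' _ _ ofNat_ne_top]
        rfl

theorem gagSq_neg (v : Rn n → ℝ) : gagSq n s (-v) = gagSq n s v := by
  unfold gagSq
  congr 1 with p
  congr 2
  simp only [Pi.neg_apply]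
  ring

theorem gagSq_comp_le {F : ℝ → ℝ} (hF : LipschitzWith 1 F) (u : Rn n → ℝ) :
    gagSq n s (fun x => F (u x)) ≤ gagSq n s u := by
  refine lintegral_mono fun p => ENNReal.ofReal_le_ofReal
    (div_le_div_of_nonneg_right ?_ (by positivity))
  have h := hF.dist_le_mul (u p.1) (u p.2)
  rw [NNReal.coe_one, one_mul, Real.dist_eq, Real.dist_eq] at h
  exact sq_le_sq.2 h

theorem energy_neg_right (u v : Rn n → ℝ) : energy n s u (-v) = -energy n s u v := by
  rw [energy, energy, ← mul_neg, ← integral_neg]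
  congr 2
  funext p
  simp only [Pi.neg_apply]
  ring

theorem sub_mul_sub_nonpos_of_antitone {g : ℝ → ℝ} (hg : Antitone g) (a b : ℝ) :
    (a - b) * (g a - g b) ≤ 0 := by
  rcases le_total a b with h | h
  · exact mul_nonpos_of_nonpos_of_nonneg (sub_nonpos.2 h) (sub_nonneg.2 (hg h))
  · exact mul_nonpos_of_nonneg_of_nonpos (sub_nonneg.2 h) (sub_nonpos.2 (hg h))

theorem energy_comp_nonpos_of_antitone (u : Rn n → ℝ) {g : ℝ → ℝ} (hg : Antitone g) :
    energy n s u (fun x => g (u x)) ≤ 0 :=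
  mul_nonpos_of_nonneg_of_nonpos (div_nonneg (cns_nonneg n s) zero_le_two) <|
    integral_nonpos fun p =>
      div_nonpos_of_nonpos_of_nonneg (sub_mul_sub_nonpos_of_antitone hg _ _) (by positivity)

theorem antitone_max_zero_sub_self : Antitone fun t : ℝ => max t 0 - t := by
  intro a b hab
  obtain ⟨ha, ha'⟩ | ⟨ha, ha'⟩ := max_cases a 0 <;>
    obtain ⟨hb, hb'⟩ | ⟨hb, hb'⟩ := max_cases b 0 <;>
    simp only [ha, hb] <;> linarith

theorem ae_nonneg_of_integral_max_zero_sub_self_nonpos {α : Type*} [MeasurableSpace α]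
    {μ : Measure α} {f : α → ℝ} (hf : Integrable f μ)
    (h : ∫ x, (max (f x) 0 - f x) ∂μ ≤ 0) : ∀ᵐ x ∂μ, 0 ≤ f x := by
  have hg : 0 ≤ fun x => max (f x) 0 - f x := fun x => sub_nonneg.2 (le_max_left _ _)
  have hzero := (integral_eq_zero_iff_of_nonneg hg (hf.pos_part.sub hf)).1
    (le_antisymm h (integral_nonneg hg))
  filter_upwards [hzero] with x hx
  exact max_eq_left_iff.1 (sub_eq_zero.1 hx)

variable {D E : Set (Rn n)} {u v w : Rn n → ℝ}

theorem Ds.mono (hDE : D ⊆ E) (hw : Ds n s D w) : Ds n s E w :=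
  ⟨hw.1, hw.2.1, hw.2.2.mono fun _ h hx => h fun hxD => hx (hDE hxD)⟩

theorem Ds.add (hu : Ds n s D u) (hv : Ds n s D v) : Ds n s D (u + v) := by
  refine ⟨hu.1.add hv.1, (gagSq_add_le hu.1.1.aemeasurable v).trans_lt ?_, ?_⟩
  · exact ENNReal.add_lt_top.2 ⟨ENNReal.mul_lt_top ofNat_lt_top hu.2.1,
      ENNReal.mul_lt_top ofNat_lt_top hv.2.1⟩
  · filter_upwards [hu.2.2, hv.2.2] with x hux hvx hx
    simp [hux hx, hvx hx]

theorem Ds.neg (hw : Ds n s D w) : Ds n s D (-w) :=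
  ⟨hw.1.neg, (gagSq_neg w).trans_lt hw.2.1, hw.2.2.mono fun x h hx => by simp [h hx]⟩

theorem Ds.max_zero (hw : Ds n s D w) : Ds n s D (fun x => max (w x) 0) :=
  ⟨hw.1.pos_part, (gagSq_comp_le (LipschitzWith.id.max_const 0) w).trans_lt hw.2.1,
    hw.2.2.mono fun x h hx => by simp [h hx]⟩

theorem Ds.integrable (hD : Bornology.IsBounded D) (hw : Ds n s D w) : Integrable w := by
  have : Fact (volume D < ∞) := ⟨hD.measure_lt_top⟩
  exact IntegrableOn.integrable_of_ae_notMem_eq_zero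
    ((hw.1.restrict D).integrable one_le_two) hw.2.2

end

theorem stmt0_general (n : ℕ) (s : ℝ)
    (Ω : Set (Rn n)) (hΩb : Bornology.IsBounded Ω)
    (A : Set (Rn n)) (hAΩ : A ⊆ Ω)
    (KA : Set (Rn n → ℝ))
    (hKA : KA = {w | Ds n s Ω w ∧ ∀ᵐ x : Rn n, x ∉ A → w x ≤ 0})
    (w₀ : Rn n → ℝ) (hw₀ : w₀ ∈ KA)
    (hVI : ∀ v ∈ KA, energy n s w₀ (fun x => v x - w₀ x) ≥ ∫ x : Rn n, (v x - w₀ x)) :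
    (∀ᵐ x : Rn n, 0 ≤ w₀ x) ∧ Ds n s A w₀ ∧
      ∀ φ : Rn n → ℝ, Ds n s A φ → energy n s w₀ φ = ∫ x : Rn n, φ x := by
  subst hKA
  obtain ⟨hw₀Ω, hw₀_nonpos⟩ := hw₀
  have mem_K (v : Rn n → ℝ) (hv : Ds n s A v) :
      v ∈ {w | Ds n s Ω w ∧ ∀ᵐ x : Rn n, x ∉ A → w x ≤ 0} :=
    ⟨hv.mono hAΩ, hv.2.2.mono fun _ h hx => (h hx).le⟩
  have hnonneg : ∀ᵐ x, 0 ≤ w₀ x := by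
    refine ae_nonneg_of_integral_max_zero_sub_self_nonpos (hw₀Ω.integrable hΩb) ?_
    calc ∫ x, (max (w₀ x) 0 - w₀ x)
        ≤ energy n s w₀ (fun x => max (w₀ x) 0 - w₀ x) :=
          hVI _ ⟨hw₀Ω.max_zero, hw₀_nonpos.mono fun _ h hx => max_le (h hx) le_rfl⟩
      _ ≤ 0 := energy_comp_nonpos_of_antitone w₀ antitone_max_zero_sub_self
  have hw₀A : Ds n s A w₀ := ⟨hw₀Ω.1, hw₀Ω.2.1, by
    filter_upwards [hw₀_nonpos, hnonneg] with x h₁ h₂ hx using le_antisymm (h₁ hx) h₂⟩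
  refine ⟨hnonneg, hw₀A, fun φ hφ => le_antisymm ?_ ?_⟩
  · have h := hVI _ (mem_K _ (hw₀A.add hφ.neg))
    simp only [Pi.add_apply, add_sub_cancel_left] at h
    rw [energy_neg_right, Pi.neg_def, integral_neg] at h
    linarith
  · simpa only [Pi.add_apply, add_sub_cancel_left] using hVI _ (mem_K _ (hw₀A.add hφ))

theorem stmt0 (n : ℕ) (hn : 1 ≤ n) (s : ℝ) (hs : s ∈ Set.Ioo (0:ℝ) 1)
    (Ω : Set (Rn n)) (hΩo : IsOpen Ω) (hΩb : Bornology.IsBounded Ω)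
    (A : Set (Rn n)) (hAΩ : A ⊆ Ω) (hA : MeasurableSet A)
    (KA : Set (Rn n → ℝ))
    (hKA : KA = {w | Ds n s Ω w ∧ ∀ᵐ x : Rn n, x ∉ A → w x ≤ 0})
    (w₀ : Rn n → ℝ) (hw₀ : w₀ ∈ KA)
    (hVI : ∀ v ∈ KA, energy n s w₀ (fun x => v x - w₀ x) ≥ ∫ x : Rn n, (v x - w₀ x)) :
    (∀ᵐ x : Rn n, 0 ≤ w₀ x) ∧ Ds n s A w₀ ∧
      ∀ φ : Rn n → ℝ, Ds n s A φ → energy n s w₀ φ = ∫ x : Rn n, φ x :=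
  stmt0_general n s Ω hΩb A hAΩ KA hKA w₀ hw₀ hVI
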